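/- Let f : ℕ → ℝ be any total function. The class K₂ = { x infinite word | g_x = O(f) }, where g_x(n) = Σ_{i=0}^n f_x(i) is the growth function of x, is machine invariant: if x ∈ K₂ and some initial Mealy machine transforms x to y, then y ∈ K₂. -/

import Mathlib

/-- A Mealy machine with state set `Q`, input alphabet `A`, output alphabet `B`. -/
structure Mealy (Q A B : Type*) where
  step : Q → A → Q
  out  : Q → A → B

namespace Mealy

variable {Q A B : Type*}

/-- Extension of the transition function to finite words. -/
def stepW (M : Mealy Q A B) : Q → List A → Q
  | q, [] => q
  | q, a :: u => M.stepW (M.step q a) u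

/-- Extension of the output function to finite words. -/
def outW (M : Mealy Q A B) : Q → List A → List B
  | _, [] => []
  | q, a :: u => M.out q a :: M.outW (M.step q a) u

end Mealy

/-- The length-`n` prefix `x[0,n-1]` of an infinite word. -/
def wordPrefix {A : Type*} (x : ℕ → A) (n : ℕ) : List A :=
  List.ofFn (fun i : Fin n => x i)

/-- The initial machine `(M, q₀)` transforms the infinite word `x` to `y`. -/
def Mealy.Transforms {Q A B : Type*} (M : Mealy Q A B) (q₀ : Q)
    (x : ℕ → A) (y : ℕ → B) : Prop :=
  ∀ n, wordPrefix y n = M.outW q₀ (wordPrefix x n)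

/-- `w` occurs in the infinite word `x` at position `m`. -/
def IsFactorAt {A : Type*} (x : ℕ → A) (w : List A) (m : ℕ) : Prop :=
  w = List.ofFn (fun i : Fin w.length => x (m + i))

/-- `w` is a factor of the infinite word `x`. -/
def IsFactor {A : Type*} (x : ℕ → A) (w : List A) : Prop :=
  ∃ m, IsFactorAt x w m

/-- An infinite word is recurrent if every factor occurs infinitely often. -/
def Recurrent {A : Type*} (x : ℕ → A) : Prop :=
  ∀ w, IsFactor x w → ∀ N, ∃ m ≥ N, IsFactorAt x w m

/-- `x` is ultimately recurrent: some suffix of `x` is recurrent. -/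
def UltimatelyRecurrent {A : Type*} (x : ℕ → A) : Prop :=
  ∃ k, Recurrent (fun n => x (n + k))

/-- The infinite word `u v^ω`. -/
def upWord {A : Type*} (u v : List A) (hv : v ≠ []) : ℕ → A :=
  fun n =>
    if h : n < u.length then u.get ⟨n, h⟩
    else v.get ⟨(n - u.length) % v.length, Nat.mod_lt _ (List.length_pos_iff.mpr hv)⟩

/-- `x` is ultimately periodic: `x = u v^ω`. -/
def UltimatelyPeriodic {A : Type*} (x : ℕ → A) : Prop :=
  ∃ (u v : List A) (hv : v ≠ []), x = upWord u v hv

/-- The subword complexity `f_x(n)`: number of distinct length-`n` factors of `x`. -/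
noncomputable def complexity {A : Type*} (x : ℕ → A) (n : ℕ) : ℕ :=
  Set.ncard {w : List A | w.length = n ∧ IsFactor x w}

/-- The growth function `g_x(n) = ∑_{i=0}^n f_x(i)`. -/
noncomputable def growth {A : Type*} (x : ℕ → A) (n : ℕ) : ℕ :=
  ∑ i ∈ Finset.range (n + 1), complexity x i

/-- The series (cascade) composition of two Mealy machines. -/
def Mealy.series {Q₁ Q₂ A B₁ B₂ : Type*} (M₁ : Mealy Q₁ A B₁)
    (M₂ : Mealy Q₂ B₁ B₂) : Mealy (Q₁ × Q₂) A B₂ where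
  step := fun p a => (M₁.step p.1 a, M₂.step p.2 (M₁.out p.1 a))
  out  := fun p a => M₂.out p.2 (M₁.out p.1 a)

/-- An initial Mealy machine over the fixed countable alphabet ℕ:
finite state set `Fin k`, finite input and output alphabets `A, B ⊆ ℕ`. -/
structure MachineN where
  k : ℕ
  A : Finset ℕ
  B : Finset ℕ
  M : Mealy (Fin k) A B
  q₀ : Fin k

/-- `V` transforms the ℕ-valued infinite word `x` (which must be apt for `V`,
i.e. take values in `V.A`) to `y`. -/
def MachineN.TransformsN (V : MachineN) (x y : ℕ → ℕ) : Prop :=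
  ∃ (x' : ℕ → V.A) (y' : ℕ → V.B),
    (∀ n, (x' n : ℕ) = x n) ∧ (∀ n, (y' n : ℕ) = y n) ∧
    V.M.Transforms V.q₀ x' y'

/-- `x ⇀ y` : some initial Mealy machine transforms `x` to `y`. -/
def TransN (x y : ℕ → ℕ) : Prop := ∃ V : MachineN, V.TransformsN x y

/-- The set 𝔉 of all infinite words over finite subalphabets of ℕ. -/
def FWords : Set (ℕ → ℕ) := {x | (Set.range x).Finite}

/-- A nonempty set of infinite words is machine invariant if every initial
Mealy machine transforms all apt words of it into words of it. -/
def MachineInvariant (K : Set (ℕ → ℕ)) : Prop :=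
  K.Nonempty ∧ K ⊆ FWords ∧ ∀ x ∈ K, ∀ y, TransN x y → y ∈ K

/-! The factor of `y` of length `n` at position `m` is the output of the machine on the factor
of `x` at `m`, read from the state reached after the prefix of length `m`. Hence every length-`n`
factor of `y` is the image of a length-`n` factor of `x` under one of `|Q|` maps, so
`f_y(n) ≤ |Q| f_x(n)`, and summing, `g_y ≤ |Q| g_x`. -/

def factorAt {A : Type*} (x : ℕ → A) (m n : ℕ) : List A :=
  List.ofFn fun i : Fin n => x (m + i)

theorem length_factorAt {A : Type*} (x : ℕ → A) (m n : ℕ) : (factorAt x m n).length = n :=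
  List.length_ofFn

theorem isFactorAt_factorAt {A : Type*} (x : ℕ → A) (m n : ℕ) :
    IsFactorAt x (factorAt x m n) m := by
  simp only [IsFactorAt, factorAt]
  apply List.ext_getElem <;> simp

theorem wordPrefix_add {A : Type*} (x : ℕ → A) (m n : ℕ) :
    wordPrefix x (m + n) = wordPrefix x m ++ factorAt x m n := by
  rw [wordPrefix, List.ofFn_add]
  rfl

theorem Mealy.outW_append {Q A B : Type*} (M : Mealy Q A B) (q : Q) (s t : List A) :
    M.outW q (s ++ t) = M.outW q s ++ M.outW (M.stepW q s) t := by
  induction s generalizing q with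
  | nil => simp [outW, stepW]
  | cons a s ih => simp [outW, stepW, ih]

namespace Mealy.Transforms

variable {Q A B : Type*} {M : Mealy Q A B} {q₀ : Q} {x : ℕ → A} {y : ℕ → B}

theorem factorAt_eq_outW (h : M.Transforms q₀ x y) (m n : ℕ) :
    factorAt y m n = M.outW (M.stepW q₀ (wordPrefix x m)) (factorAt x m n) := by
  have hsplit := h (m + n)
  rw [wordPrefix_add, wordPrefix_add, outW_append, h m] at hsplit
  exact List.append_cancel_left hsplit

theorem factors_subset_image_outW (h : M.Transforms q₀ x y) (n : ℕ) :
    {w : List B | w.length = n ∧ IsFactor y w} ⊆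
      (fun p : Q × List A => M.outW p.1 p.2) ''
        ((Set.univ : Set Q) ×ˢ {u : List A | u.length = n ∧ IsFactor x u}) := by
  rintro w ⟨rfl, m, hm⟩
  refine ⟨(M.stepW q₀ (wordPrefix x m), factorAt x m w.length),
    ⟨trivial, length_factorAt x m _, m, isFactorAt_factorAt x m _⟩, ?_⟩
  exact (hm.trans (h.factorAt_eq_outW m _)).symm

theorem complexity_le [Finite Q] [Finite A] (h : M.Transforms q₀ x y) (n : ℕ) :
    complexity y n ≤ Nat.card Q * complexity x n := by
  have hfin : ((Set.univ : Set Q) ×ˢ {u : List A | u.length = n ∧ IsFactor x u}).Finite :=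
    Set.finite_univ.prod ((List.finite_length_eq A n).subset fun _ hu => hu.1)
  calc complexity y n
      ≤ ((fun p : Q × List A => M.outW p.1 p.2) ''
          ((Set.univ : Set Q) ×ˢ {u : List A | u.length = n ∧ IsFactor x u})).ncard :=
        Set.ncard_le_ncard (h.factors_subset_image_outW n) (hfin.image _)
    _ ≤ ((Set.univ : Set Q) ×ˢ {u : List A | u.length = n ∧ IsFactor x u}).ncard :=
        Set.ncard_image_le hfin
    _ = Nat.card Q * complexity x n := by rw [Set.ncard_prod, Set.ncard_univ]; rfl

theorem growth_le [Finite Q] [Finite A] (h : M.Transforms q₀ x y) (n : ℕ) :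
    growth y n ≤ Nat.card Q * growth x n := by
  rw [growth, growth, Finset.mul_sum]
  exact Finset.sum_le_sum fun i _ => h.complexity_le i

end Mealy.Transforms

theorem growth_bigO_invariant_general (f : ℕ → ℝ)
    {Q A B : Type*} [Fintype Q] [Fintype A]
    (M : Mealy Q A B) (q₀ : Q) (x : ℕ → A) (y : ℕ → B)
    (h : M.Transforms q₀ x y)
    (hx : ∃ c > (0 : ℝ), ∀ n, (growth x n : ℝ) ≤ c * |f n|) :
    ∃ c > (0 : ℝ), ∀ n, (growth y n : ℝ) ≤ c * |f n| := by
  obtain ⟨c, hc, hbound⟩ := hx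
  have hQ : 0 < Nat.card Q := @Nat.card_pos _ ⟨q₀⟩ _
  refine ⟨Nat.card Q * c, by positivity, fun n => ?_⟩
  calc (growth y n : ℝ) ≤ Nat.card Q * growth x n := by exact_mod_cast h.growth_le n
    _ ≤ Nat.card Q * (c * |f n|) := by gcongr; exact hbound n
    _ = Nat.card Q * c * |f n| := by ring

/-- the class of infinite words with growth function `O(f)`
is machine invariant. -/
theorem growth_bigO_invariant (f : ℕ → ℝ)
    {Q A B : Type*} [Fintype Q] [Fintype A] [Fintype B]
    (M : Mealy Q A B) (q₀ : Q) (x : ℕ → A) (y : ℕ → B)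
    (h : M.Transforms q₀ x y)
    (hx : ∃ c > (0 : ℝ), ∀ n, (growth x n : ℝ) ≤ c * |f n|) :
    ∃ c > (0 : ℝ), ∀ n, (growth y n : ℝ) ≤ c * |f n| :=
  growth_bigO_invariant_general f M q₀ x y h hx
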